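/- Let (X,d) be a metric space, T > 0, and γ₀ : [0,T] → X a curve. Let h : X → X be an isometry with h(γ₀(0)) = γ₀(T), and define γ : ℝ → X by γ(t) = h^m(γ₀(t − mT)) for t ∈ [mT, (m+1)T], m ∈ ℤ. Then h^n(γ(t)) = γ(t + nT) for all t ∈ ℝ and n ∈ ℤ, and if γ₀ satisfies d(γ₀(s), γ₀(t)) ≤ C|t−s| for all s,t ∈ [0,T] and there exists α > 0 with d(h^m(z₀), z₀) ≥ α|m| for all m ∈ ℤ where z₀ = γ₀(0), then there exist λ ≥ 1, κ ≥ 0 such that (1/λ)|t−s| − κ ≤ d(γ(s), γ(t)) ≤ λ|t−s| + κ for all s,t ∈ ℝ. -/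

import Mathlib

section Aux

variable {X : Type*} [MetricSpace X]

lemma aux_key (h : Equiv.Perm X) (hiso : Isometry ⇑h) :
    ∀ (n : ℤ) (x y : X), dist ((h ^ n) x) ((h ^ n) y) = dist x y := by
  have hinv : ∀ x y : X, dist (h⁻¹ x) (h⁻¹ y) = dist x y := by
    intro x y
    rw [← hiso.dist_eq (h⁻¹ x) (h⁻¹ y)]
    simp [Equiv.Perm.inv_def]
  intro n
  induction n using Int.induction_on with
  | zero => simp
  | succ k ih =>
      intro x y
      rw [zpow_add_one, Equiv.Perm.mul_apply, Equiv.Perm.mul_apply, ih, hiso.dist_eq]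
  | pred k ih =>
      intro x y
      rw [zpow_sub_one, Equiv.Perm.mul_apply, Equiv.Perm.mul_apply, ih, hinv]

lemma aux_chain (h : Equiv.Perm X) (hiso : Isometry ⇑h) (z : X) :
    ∀ k : ℤ, dist ((h ^ k) z) z ≤ |(k : ℝ)| * dist (h z) z := by
  have key := aux_key h hiso
  have hd : 0 ≤ dist (h z) z := dist_nonneg
  intro k
  induction k using Int.induction_on with
  | zero => simp
  | succ k ih =>
      have e1 : dist ((h ^ ((k : ℤ) + 1)) z) ((h ^ (k : ℤ)) z) = dist (h z) z := by
        rw [zpow_add_one, Equiv.Perm.mul_apply, key]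
      have hk : (0 : ℝ) ≤ (k : ℝ) := Nat.cast_nonneg k
      have habs : |((k : ℝ) + 1)| = |(k : ℝ)| + 1 := by
        rw [abs_of_nonneg (by linarith), abs_of_nonneg hk]
      calc dist ((h ^ ((k : ℤ) + 1)) z) z
          ≤ dist ((h ^ ((k : ℤ) + 1)) z) ((h ^ (k : ℤ)) z) + dist ((h ^ (k : ℤ)) z) z :=
            dist_triangle _ _ _
        _ ≤ dist (h z) z + |((k : ℤ) : ℝ)| * dist (h z) z := by rw [e1]; linarith
        _ = (|((k : ℤ) : ℝ)| + 1) * dist (h z) z := by ring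
        _ = |(((k : ℤ) + 1 : ℤ) : ℝ)| * dist (h z) z := by push_cast; rw [habs]
  | pred k ih =>
      have e1 : dist ((h ^ (-(k : ℤ) - 1)) z) ((h ^ (-(k : ℤ))) z) = dist (h⁻¹ z) z := by
        rw [zpow_sub_one, Equiv.Perm.mul_apply, key]
      have e2 : dist (h⁻¹ z) z = dist (h z) z := by
        rw [← hiso.dist_eq (h⁻¹ z) z]
        simp [Equiv.Perm.inv_def, dist_comm]
      have hk : (0 : ℝ) ≤ (k : ℝ) := Nat.cast_nonneg k
      have habs : |(-(k : ℝ) - 1)| = |(-(k : ℝ))| + 1 := by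
        rw [abs_of_nonpos (by linarith), abs_of_nonpos (by linarith)]; ring
      calc dist ((h ^ (-(k : ℤ) - 1)) z) z
          ≤ dist ((h ^ (-(k : ℤ) - 1)) z) ((h ^ (-(k : ℤ))) z) + dist ((h ^ (-(k : ℤ))) z) z :=
            dist_triangle _ _ _
        _ ≤ dist (h z) z + |((-(k : ℤ) : ℤ) : ℝ)| * dist (h z) z := by rw [e1, e2]; linarith
        _ = (|(-(k : ℝ))| + 1) * dist (h z) z := by push_cast; ring
        _ = |((-(k : ℤ) - 1 : ℤ) : ℝ)| * dist (h z) z := by push_cast; rw [habs]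

end Aux

/-- Gluing translates of a curve `γ₀` from `z₀` to `h(z₀)` by the powers of an isometry `h`
yields an `h`-equivariant curve `γ`, which is a quasi-geodesic line when `γ₀` is Lipschitz
and `h` has positive translation length. -/
theorem statement5 {X : Type*} [MetricSpace X] (T : ℝ) (hT : 0 < T)
    (γ₀ : ℝ → X) (h : Equiv.Perm X) (hiso : Isometry ⇑h)
    (hglue : h (γ₀ 0) = γ₀ T)
    (γ : ℝ → X)
    (hγ : ∀ t : ℝ, γ t = (h ^ (⌊t / T⌋ : ℤ)) (γ₀ (t - (⌊t / T⌋ : ℝ) * T))) :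
    (∀ t : ℝ, ∀ n : ℤ, (h ^ n) (γ t) = γ (t + n * T)) ∧
    ((∃ C : ℝ, ∀ s ∈ Set.Icc (0:ℝ) T, ∀ t ∈ Set.Icc (0:ℝ) T,
        dist (γ₀ s) (γ₀ t) ≤ C * |t - s|) →
      (∃ α : ℝ, 0 < α ∧ ∀ m : ℤ, α * |(m : ℝ)| ≤ dist ((h ^ m) (γ₀ 0)) (γ₀ 0)) →
      ∃ lam κ : ℝ, 1 ≤ lam ∧ 0 ≤ κ ∧ ∀ s t : ℝ,
        (1 / lam) * |t - s| - κ ≤ dist (γ s) (γ t) ∧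
        dist (γ s) (γ t) ≤ lam * |t - s| + κ) := by
  have hT' : T ≠ 0 := hT.ne'
  have key := aux_key h hiso
  constructor
  · -- equivariance
    intro t n
    have hfl : (⌊(t + n * T) / T⌋ : ℤ) = ⌊t / T⌋ + n := by
      rw [add_div, mul_div_cancel_right₀ _ hT', Int.floor_add_intCast]
    rw [hγ t, hγ (t + n * T), hfl]
    have harg : t + n * T - ((⌊t / T⌋ + n : ℤ) : ℝ) * T = t - (⌊t / T⌋ : ℝ) * T := by
      push_cast; ring
    rw [harg, add_comm (⌊t / T⌋ : ℤ) n, zpow_add, Equiv.Perm.mul_apply]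
  · rintro ⟨C, hC⟩ ⟨α, hα, hαm⟩
    set z₀ := γ₀ 0 with hz₀
    have hCz : dist (h z₀) z₀ ≤ C * T := by
      have h0 := hC T ⟨hT.le, le_refl T⟩ 0 ⟨le_refl 0, hT.le⟩
      have habs : |(0 : ℝ) - T| = T := by rw [abs_sub_comm, sub_zero, abs_of_pos hT]
      rw [habs] at h0
      calc dist (h z₀) z₀ = dist (γ₀ T) z₀ := by rw [hz₀, hglue]
        _ ≤ C * T := h0
    have hαCT : α ≤ C * T := by
      have h1 := hαm 1
      simp only [zpow_one] at h1
      have e : α * |((1 : ℤ) : ℝ)| = α := by norm_num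
      rw [e] at h1
      exact h1.trans hCz
    have hCTpos : 0 < C * T := lt_of_lt_of_le hα hαCT
    have hCpos : 0 < C := by nlinarith
    have hchain := aux_chain h hiso z₀
    have hdd : ∀ m n : ℤ, dist ((h ^ m) z₀) ((h ^ n) z₀) = dist ((h ^ (m - n)) z₀) z₀ := by
      intro m n
      have e : (h ^ m) z₀ = (h ^ n) ((h ^ (m - n)) z₀) := by
        rw [← Equiv.Perm.mul_apply, ← zpow_add]
        congr 1
        ring
      rw [e]
      exact key n _ _
    have hfrac : ∀ s : ℝ, dist (γ s) ((h ^ (⌊s / T⌋ : ℤ)) z₀) ≤ C * T := by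
      intro s
      have h1 : (⌊s / T⌋ : ℝ) ≤ s / T := Int.floor_le _
      have h2 : s / T < (⌊s / T⌋ : ℝ) + 1 := Int.lt_floor_add_one _
      have h1' : (⌊s / T⌋ : ℝ) * T ≤ s := by
        have := mul_le_mul_of_nonneg_right h1 hT.le
        rwa [div_mul_cancel₀ _ hT'] at this
      have h2' : s - (⌊s / T⌋ : ℝ) * T ≤ T := by
        have := mul_le_mul_of_nonneg_right h2.le hT.le
        rw [div_mul_cancel₀ _ hT'] at this
        nlinarith
      have hmem : s - (⌊s / T⌋ : ℝ) * T ∈ Set.Icc (0 : ℝ) T := ⟨by linarith, h2'⟩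
      have hd := hC _ hmem 0 ⟨le_refl 0, hT.le⟩
      rw [hγ s, key]
      have habs : |0 - (s - (⌊s / T⌋ : ℝ) * T)| = s - (⌊s / T⌋ : ℝ) * T := by
        rw [abs_sub_comm, sub_zero, abs_of_nonneg (by linarith)]
      rw [habs] at hd
      calc dist (γ₀ (s - (⌊s / T⌋ : ℝ) * T)) z₀ ≤ C * (s - (⌊s / T⌋ : ℝ) * T) := hd
        _ ≤ C * T := by nlinarith
    have hab : ∀ s t : ℝ, |t / T - s / T| = |t - s| / T := by
      intro s t
      rw [div_sub_div_same, abs_div, abs_of_pos hT]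
    have hfl1 : ∀ s t : ℝ, |((⌊t / T⌋ : ℤ) : ℝ) - ((⌊s / T⌋ : ℤ) : ℝ)| ≤ |t - s| / T + 1 := by
      intro s t
      have h1 : (⌊t / T⌋ : ℝ) ≤ t / T := Int.floor_le _
      have h2 : t / T < (⌊t / T⌋ : ℝ) + 1 := Int.lt_floor_add_one _
      have h3 : (⌊s / T⌋ : ℝ) ≤ s / T := Int.floor_le _
      have h4 : s / T < (⌊s / T⌋ : ℝ) + 1 := Int.lt_floor_add_one _
      have h5 : t / T - s / T ≤ |t - s| / T := by
        rw [← hab s t]; exact le_abs_self _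
      have h6 : s / T - t / T ≤ |t - s| / T := by
        rw [← hab s t, abs_sub_comm]; exact le_abs_self _
      exact abs_le.mpr ⟨by linarith, by linarith⟩
    have hfl2 : ∀ s t : ℝ, |t - s| / T - 1 ≤ |((⌊t / T⌋ : ℤ) : ℝ) - ((⌊s / T⌋ : ℤ) : ℝ)| := by
      intro s t
      have h1 : (⌊t / T⌋ : ℝ) ≤ t / T := Int.floor_le _
      have h2 : t / T < (⌊t / T⌋ : ℝ) + 1 := Int.lt_floor_add_one _
      have h3 : (⌊s / T⌋ : ℝ) ≤ s / T := Int.floor_le _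
      have h4 : s / T < (⌊s / T⌋ : ℝ) + 1 := Int.lt_floor_add_one _
      have h5 : ((⌊t / T⌋ : ℤ) : ℝ) - ((⌊s / T⌋ : ℤ) : ℝ) ≤ |((⌊t / T⌋ : ℤ) : ℝ) - ((⌊s / T⌋ : ℤ) : ℝ)| :=
        le_abs_self _
      have h6 : ((⌊s / T⌋ : ℤ) : ℝ) - ((⌊t / T⌋ : ℤ) : ℝ) ≤ |((⌊t / T⌋ : ℤ) : ℝ) - ((⌊s / T⌋ : ℤ) : ℝ)| := by
        rw [abs_sub_comm]; exact le_abs_self _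
      have h7 : |t / T - s / T| ≤ |((⌊t / T⌋ : ℤ) : ℝ) - ((⌊s / T⌋ : ℤ) : ℝ)| + 1 :=
        abs_le.mpr ⟨by linarith, by linarith⟩
      rw [hab s t] at h7
      linarith
    refine ⟨max (max C (T / α)) 1, 3 * (C * T) + α, le_max_right _ _, by nlinarith, ?_⟩
    set lam := max (max C (T / α)) 1 with hlam
    have hlamC : C ≤ lam := le_trans (le_max_left _ _) (le_max_left _ _)
    have hlamTα : T / α ≤ lam := le_trans (le_max_right _ _) (le_max_left _ _)
    have hlam1 : (1 : ℝ) ≤ lam := le_max_right _ _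
    have hlampos : (0 : ℝ) < lam := lt_of_lt_of_le one_pos hlam1
    have hinvlam : 1 / lam ≤ α / T := by
      rw [div_le_div_iff₀ hlampos hT]
      rw [div_le_iff₀ hα] at hlamTα
      nlinarith
    intro s t
    set m := (⌊s / T⌋ : ℤ) with hm
    set n := (⌊t / T⌋ : ℤ) with hn
    have h1 := hfrac s
    have h2 := hfrac t
    have ecast : |((m - n : ℤ) : ℝ)| = |(m : ℝ) - (n : ℝ)| := by push_cast; ring_nf
    have hDup : dist ((h ^ m) z₀) ((h ^ n) z₀) ≤ |(m : ℝ) - (n : ℝ)| * (C * T) := by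
      rw [hdd m n]
      calc dist ((h ^ (m - n)) z₀) z₀ ≤ |((m - n : ℤ) : ℝ)| * dist (h z₀) z₀ := hchain (m - n)
        _ = |(m : ℝ) - (n : ℝ)| * dist (h z₀) z₀ := by rw [ecast]
        _ ≤ |(m : ℝ) - (n : ℝ)| * (C * T) :=
            mul_le_mul_of_nonneg_left hCz (abs_nonneg _)
    have hDlow : α * |(m : ℝ) - (n : ℝ)| ≤ dist ((h ^ m) z₀) ((h ^ n) z₀) := by
      rw [hdd m n, ← ecast]
      exact hαm (m - n)
    have htri1 : dist (γ s) (γ t) ≤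
        dist (γ s) ((h ^ m) z₀) + dist ((h ^ m) z₀) ((h ^ n) z₀) + dist ((h ^ n) z₀) (γ t) :=
      dist_triangle4 _ _ _ _
    have htri2 : dist ((h ^ m) z₀) ((h ^ n) z₀) ≤
        dist ((h ^ m) z₀) (γ s) + dist (γ s) (γ t) + dist (γ t) ((h ^ n) z₀) :=
      dist_triangle4 _ _ _ _
    have hc1 : dist ((h ^ n) z₀) (γ t) = dist (γ t) ((h ^ n) z₀) := dist_comm _ _
    have hc2 : dist ((h ^ m) z₀) (γ s) = dist (γ s) ((h ^ m) z₀) := dist_comm _ _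
    have hfl1' := hfl1 s t
    have hfl2' := hfl2 s t
    rw [← hm, ← hn, abs_sub_comm ((n:ℝ)) ((m:ℝ))] at hfl1' hfl2'
    have habs0 : (0 : ℝ) ≤ |t - s| := abs_nonneg _
    have harith : |t - s| / T * (C * T) = C * |t - s| := by field_simp
    constructor
    · -- lower bound
      have hmul1 : α * (|t - s| / T - 1) ≤ α * |(m : ℝ) - (n : ℝ)| :=
        mul_le_mul_of_nonneg_left hfl2' hα.le
      have hmul2 : (1 / lam) * |t - s| ≤ (α / T) * |t - s| :=
        mul_le_mul_of_nonneg_right hinvlam habs0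
      have harith2 : α * (|t - s| / T) = (α / T) * |t - s| := by ring
      nlinarith [htri2, h1, h2, hDlow]
    · -- upper bound
      have hmul1 : |(m : ℝ) - (n : ℝ)| * (C * T) ≤ (|t - s| / T + 1) * (C * T) :=
        mul_le_mul_of_nonneg_right hfl1' hCTpos.le
      have hmul2 : C * |t - s| ≤ lam * |t - s| :=
        mul_le_mul_of_nonneg_right hlamC habs0
      nlinarith [htri1, h1, h2, hDup]
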